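/- Block-diagonality of the chi matrix is equivalent to superselection-rule validity: let χ be a family of complex coefficients indexed by pairs of binary vectors ū, ū' ∈ {0,1}^{2m}, and define the linear map M(X) = Σ_{ū,ū'} χ_{ū,ū'} C_ū X C_ū' on 2^m × 2^m complex matrices. Then the Choi matrix Choi(M) commutes with C ⊗ C if and only if χ_{ū,ū'} = 0 for all pairs with |ū| ≢ |ū'| (mod 2). -/

import Mathlib

open Matrix

noncomputable section

def σI : Matrix (Fin 2) (Fin 2) ℂ := 1
def σX : Matrix (Fin 2) (Fin 2) ℂ := !![0, 1; 1, 0]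
def σY : Matrix (Fin 2) (Fin 2) ℂ := !![0, -Complex.I; Complex.I, 0]
def σZ : Matrix (Fin 2) (Fin 2) ℂ := !![1, 0; 0, -1]

/-- Tensor product over `m` qubit sites of single-site matrices. -/
def tensProd (m : ℕ) (f : Fin m → Matrix (Fin 2) (Fin 2) ℂ) :
    Matrix (Fin m → Fin 2) (Fin m → Fin 2) ℂ :=
  Matrix.of fun n n' => ∏ j, f j (n j) (n' j)

/-- Jordan–Wigner Majorana operators, 0-indexed: `majorana m k` is `c_{k+1}`,
i.e. `c_{2i-1} = X_i Z_{i+1} ⋯ Z_m` and `c_{2i} = Y_i Z_{i+1} ⋯ Z_m`. -/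
def majorana (m : ℕ) (k : Fin (2 * m)) :
    Matrix (Fin m → Fin 2) (Fin m → Fin 2) ℂ :=
  tensProd m fun j =>
    if (j : ℕ) < (k : ℕ) / 2 then σI
    else if (j : ℕ) = (k : ℕ) / 2 then (if (k : ℕ) % 2 = 0 then σX else σY)
    else σZ

/-- Hamming weight of a binary vector. -/
def hw {n : ℕ} (u : Fin n → Bool) : ℕ := ∑ k, if u k then 1 else 0

/-- Majorana product operator `C_ū = i^⌊|ū|/2⌋ c_1^{u_1} ⋯ c_{2m}^{u_{2m}}`. -/
def Cu (m : ℕ) (u : Fin (2 * m) → Bool) :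
    Matrix (Fin m → Fin 2) (Fin m → Fin 2) ℂ :=
  Complex.I ^ (hw u / 2) •
    ((List.finRange (2 * m)).map fun k => if u k then majorana m k else 1).prod

/-- Parity operator `C = Z^{⊗m}`. -/
def parity (m : ℕ) : Matrix (Fin m → Fin 2) (Fin m → Fin 2) ℂ :=
  tensProd m fun _ => σZ

/-- The slice of a matrix on a product index, fixing the second components. -/
def matSlice {A B : Type*} (b b' : B) :
    Matrix (A × B) (A × B) ℂ →ₗ[ℂ] Matrix A A ℂ where
  toFun X := Matrix.of fun a a' => X (a, b) (a', b')
  map_add' _ _ := rfl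
  map_smul' _ _ := rfl

/-- The induced map `M ⊗ id` on a composite system. -/
def tensId {A B : Type*} (M : Matrix A A ℂ →ₗ[ℂ] Matrix A A ℂ) :
    Matrix (A × B) (A × B) ℂ →ₗ[ℂ] Matrix (A × B) (A × B) ℂ where
  toFun X := Matrix.of fun p q => M (matSlice p.2 q.2 X) p.1 q.1
  map_add' X Y := by
    ext ⟨a, b⟩ ⟨a', b'⟩
    simp [Matrix.add_apply, map_add]
  map_smul' c X := by
    ext ⟨a, b⟩ ⟨a', b'⟩
    simp [Matrix.smul_apply, _root_.map_smul]

/-- The (unnormalised) maximally entangled state `|Φ⟩⟨Φ|`,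
`Φ = ∑ n̄, |n̄⟩ ⊗ |n̄⟩`. -/
def phiMat (A : Type*) [DecidableEq A] : Matrix (A × A) (A × A) ℂ :=
  Matrix.of fun p q => (if p.1 = p.2 then 1 else 0) * (if q.1 = q.2 then 1 else 0)

/-- The Choi matrix `Choi(M) = (M ⊗ id)(|Φ⟩⟨Φ|)`. -/
def choi {A : Type*} [DecidableEq A] (M : Matrix A A ℂ →ₗ[ℂ] Matrix A A ℂ) :
    Matrix (A × A) (A × A) ℂ :=
  tensId M (phiMat A)

/-- The linear map `X ↦ ∑_{ū,ū'} χ_{ū,ū'} C_ū X C_ū'` determined by a chi matrix. -/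
def chiMap (m : ℕ) (χ : (Fin (2 * m) → Bool) → (Fin (2 * m) → Bool) → ℂ) :
    Matrix (Fin m → Fin 2) (Fin m → Fin 2) ℂ →ₗ[ℂ]
      Matrix (Fin m → Fin 2) (Fin m → Fin 2) ℂ where
  toFun X := ∑ u, ∑ u', χ u u' • (Cu m u * X * Cu m u')
  map_add' X Y := by
    simp [Matrix.mul_add, Matrix.add_mul, smul_add, Finset.sum_add_distrib]
  map_smul' c X := by
    simp [Matrix.mul_smul, Matrix.smul_mul, Finset.smul_sum, smul_smul, mul_comm]

/-!
Up to a nonzero phase, `C_ū` is the Pauli string whose label is a `ZMod 2`-linear function of `ū`;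
the labels of the single Majorana operators are triangular, hence linearly independent, so the
`C_ū` are pairwise orthogonal for the Hilbert–Schmidt product. Each Majorana operator
anticommutes with the parity `C`, so `C C_ū = (-1)^|ū| C_ū C` and the entry `C_ū a b` vanishes
unless the Fock parities of `a` and `b` multiply to `(-1)^|ū|`.

The Choi entry at `((a, b), (a', b'))` is `∑ χ_{ū,ū'} C_ū a b * C_ū' b' a'`, and `C ⊗ C` is
diagonal, so commutation says that the Choi matrix vanishes between different parity blocks.
For parity-even `χ` this holds term by term. Conversely, pairing the Choi matrix with
`conj C_ū ⊗ conj C_ū'` isolates `χ_{ū,ū'}` by orthogonality, while for `|ū| ≢ |ū'|` every term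
of that pairing lies between different parity blocks and vanishes.
-/

section TensorProduct

variable {m : ℕ}

lemma tensProd_mul (f g : Fin m → Matrix (Fin 2) (Fin 2) ℂ) :
    tensProd m f * tensProd m g = tensProd m (fun j => f j * g j) := by
  ext n n'
  simp only [tensProd, mul_apply, of_apply, ← Finset.prod_mul_distrib]
  exact (Fintype.prod_sum fun j x => f j (n j) x * g j x (n' j)).symm

lemma tensProd_smul (z : Fin m → ℂ) (f : Fin m → Matrix (Fin 2) (Fin 2) ℂ) :
    tensProd m (fun j => z j • f j) = (∏ j, z j) • tensProd m f := by
  ext n n'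
  simp [tensProd, Finset.prod_mul_distrib]

lemma tensProd_diagonal (d : Fin m → Fin 2 → ℂ) :
    tensProd m (fun j => diagonal (d j)) = diagonal fun n => ∏ j, d j (n j) := by
  ext n n'
  by_cases h : n = n'
  · subst h; simp [tensProd]
  · obtain ⟨j, hj⟩ := Function.ne_iff.mp h
    simp only [tensProd, of_apply, diagonal_apply_ne _ h]
    exact Finset.prod_eq_zero (Finset.mem_univ j) (diagonal_apply_ne _ hj)

lemma tensProd_one : tensProd m (fun _ => 1) = 1 := by
  simpa only [← diagonal_one, Finset.prod_const_one] using tensProd_diagonal fun _ _ => 1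

lemma conjTranspose_tensProd (f : Fin m → Matrix (Fin 2) (Fin 2) ℂ) :
    (tensProd m f)ᴴ = tensProd m fun j => (f j)ᴴ := by
  ext n n'
  simp [tensProd]

lemma trace_tensProd (f : Fin m → Matrix (Fin 2) (Fin 2) ℂ) :
    (tensProd m f).trace = ∏ j, (f j).trace := by
  simp only [trace, diag, tensProd, of_apply]
  exact (Fintype.prod_sum fun j x => f j x x).symm

end TensorProduct

def pauli (p : ZMod 2 × ZMod 2) : Matrix (Fin 2) (Fin 2) ℂ :=
  if p.1 = 0 then (if p.2 = 0 then σI else σZ) else (if p.2 = 0 then σX else σY)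

lemma zmod_two_eq_zero_or_one (x : ZMod 2) : x = 0 ∨ x = 1 := by
  revert x
  decide

lemma pauli_mul (p q : ZMod 2 × ZMod 2) :
    ∃ z : ℂ, z ≠ 0 ∧ pauli p * pauli q = z • pauli (p + q) := by
  -- the phase is the Hilbert–Schmidt coefficient of `pauli (p + q)`, whose squared norm is `2`
  refine ⟨(pauli p * pauli q * (pauli (p + q))ᴴ).trace / 2, ?_, ?_⟩ <;>
  · obtain ⟨x, z⟩ := p
    obtain ⟨x', z'⟩ := q
    have h11 : (1 + 1 : ZMod 2) = 0 := rfl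
    rcases zmod_two_eq_zero_or_one x with rfl | rfl <;>
      rcases zmod_two_eq_zero_or_one z with rfl | rfl <;>
      rcases zmod_two_eq_zero_or_one x' with rfl | rfl <;>
      rcases zmod_two_eq_zero_or_one z' with rfl | rfl <;>
      simp only [← Matrix.ext_iff, Fin.forall_fin_two, trace, diag, mul_apply, Fin.sum_univ_two,
        conjTranspose_apply, Matrix.smul_apply] <;>
      simp [pauli, σI, σX, σY, σZ, h11]

lemma trace_conjTranspose_pauli_mul (p q : ZMod 2 × ZMod 2) :
    ((pauli p)ᴴ * pauli q).trace = if p = q then 2 else 0 := by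
  obtain ⟨x, z⟩ := p
  obtain ⟨x', z'⟩ := q
  rcases zmod_two_eq_zero_or_one x with rfl | rfl <;>
    rcases zmod_two_eq_zero_or_one z with rfl | rfl <;>
    rcases zmod_two_eq_zero_or_one x' with rfl | rfl <;>
    rcases zmod_two_eq_zero_or_one z' with rfl | rfl <;>
    simp [pauli, σI, σX, σY, σZ, trace, mul_apply, Fin.sum_univ_two] <;> norm_num

def pauliString (m : ℕ) (w : Fin m → ZMod 2 × ZMod 2) :
    Matrix (Fin m → Fin 2) (Fin m → Fin 2) ℂ :=
  tensProd m fun j => pauli (w j)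

section PauliString

variable {m : ℕ}

lemma pauliString_mul (w v : Fin m → ZMod 2 × ZMod 2) :
    ∃ z : ℂ, z ≠ 0 ∧ pauliString m w * pauliString m v = z • pauliString m (w + v) := by
  choose z hz hmul using fun j => pauli_mul (w j) (v j)
  refine ⟨∏ j, z j, Finset.prod_ne_zero_iff.mpr fun j _ => hz j, ?_⟩
  simp only [pauliString, tensProd_mul, hmul, tensProd_smul, Pi.add_apply]

lemma trace_conjTranspose_pauliString_mul (w v : Fin m → ZMod 2 × ZMod 2) :
    ((pauliString m w)ᴴ * pauliString m v).trace = if w = v then 2 ^ m else 0 := by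
  simp only [pauliString, conjTranspose_tensProd, tensProd_mul, trace_tensProd,
    trace_conjTranspose_pauli_mul]
  split_ifs with h
  · simp [h]
  · obtain ⟨j, hj⟩ := Function.ne_iff.mp h
    exact Finset.prod_eq_zero (Finset.mem_univ j) (if_neg hj)

def IsScaledPauliString (m : ℕ) (w : Fin m → ZMod 2 × ZMod 2)
    (A : Matrix (Fin m → Fin 2) (Fin m → Fin 2) ℂ) : Prop :=
  ∃ z : ℂ, z ≠ 0 ∧ A = z • pauliString m w

lemma isScaledPauliString_one : IsScaledPauliString m 0 1 :=
  ⟨1, one_ne_zero, by simp [pauliString, pauli, σI, tensProd_one]⟩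

namespace IsScaledPauliString

variable {w v : Fin m → ZMod 2 × ZMod 2} {A B : Matrix (Fin m → Fin 2) (Fin m → Fin 2) ℂ}

lemma smul (hA : IsScaledPauliString m w A) {c : ℂ} (hc : c ≠ 0) :
    IsScaledPauliString m w (c • A) := by
  obtain ⟨z, hz, rfl⟩ := hA
  exact ⟨c * z, mul_ne_zero hc hz, smul_smul c z _⟩

lemma mul (hA : IsScaledPauliString m w A) (hB : IsScaledPauliString m v B) :
    IsScaledPauliString m (w + v) (A * B) := by
  obtain ⟨z, hz, rfl⟩ := hA
  obtain ⟨z', hz', rfl⟩ := hB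
  obtain ⟨c, hc, hmul⟩ := pauliString_mul w v
  refine ⟨z * z' * c, mul_ne_zero (mul_ne_zero hz hz') hc, ?_⟩
  rw [smul_mul_smul_comm, hmul, smul_smul]

lemma trace_conjTranspose_mul_eq_zero (hA : IsScaledPauliString m w A)
    (hB : IsScaledPauliString m v B) (hwv : w ≠ v) : (Aᴴ * B).trace = 0 := by
  obtain ⟨z, -, rfl⟩ := hA
  obtain ⟨z', -, rfl⟩ := hB
  simp [trace_conjTranspose_pauliString_mul, hwv]

lemma trace_conjTranspose_mul_self_ne_zero (hA : IsScaledPauliString m w A) :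
    (Aᴴ * A).trace ≠ 0 := by
  obtain ⟨z, hz, rfl⟩ := hA
  simp [trace_conjTranspose_pauliString_mul, hz]

end IsScaledPauliString

end PauliString

def majoranaLabel (m : ℕ) (k : Fin (2 * m)) : Fin m → ZMod 2 × ZMod 2 := fun j =>
  if (j : ℕ) < (k : ℕ) / 2 then 0
  else if (j : ℕ) = (k : ℕ) / 2 then (1, if (k : ℕ) % 2 = 0 then 0 else 1)
  else (0, 1)

def majoranaProductLabel (m : ℕ) (u : Fin (2 * m) → Bool) : Fin m → ZMod 2 × ZMod 2 :=
  ∑ k, (if u k then 1 else 0 : ZMod 2) • majoranaLabel m k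

section MajoranaLabel

variable {m : ℕ}

lemma majorana_eq_pauliString (k : Fin (2 * m)) :
    majorana m k = pauliString m (majoranaLabel m k) := by
  unfold majorana pauliString majoranaLabel
  congr 1
  funext j
  split_ifs <;> simp_all [pauli]

lemma sum_smul_majoranaLabel_apply (g : Fin (2 * m) → ZMod 2) (j : Fin m)
    (hg : ∀ k : Fin (2 * m), (k : ℕ) < 2 * j → g k = 0) :
    (∑ k, g k • majoranaLabel m k) j =
      (g ⟨2 * j, by omega⟩ + g ⟨2 * j + 1, by omega⟩, g ⟨2 * j + 1, by omega⟩) := by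
  rw [Finset.sum_apply, Fintype.sum_eq_add ⟨2 * j, by omega⟩ ⟨2 * j + 1, by omega⟩
    (by simp [Fin.ext_iff])]
  · have h : (2 * (j : ℕ) + 1) / 2 = j := by omega
    simp [majoranaLabel, h, Nat.add_mod]
  · rintro k ⟨hk₁, hk₂⟩
    rcases lt_or_ge (k : ℕ) (2 * j) with hlt | hge
    · simp [hg k hlt]
    · have hj : (j : ℕ) < (k : ℕ) / 2 := by
        simp only [ne_eq, Fin.ext_iff] at hk₁ hk₂; omega
      simp [majoranaLabel, hj]

lemma linearIndependent_majoranaLabel : LinearIndependent (ZMod 2) (majoranaLabel m) := by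
  rw [Fintype.linearIndependent_iff]
  intro g hg k
  induction k using WellFoundedLT.induction with
  | ind k ih =>
    let j : Fin m := ⟨k / 2, by omega⟩
    have hsite := congrFun hg j
    rw [sum_smul_majoranaLabel_apply g j fun k' hk' => ih k' (by simp [j] at hk'; omega)] at hsite
    obtain ⟨hsum, hodd⟩ := Prod.mk_eq_zero.mp hsite
    rw [hodd, add_zero] at hsum
    rcases Nat.even_or_odd' (k : ℕ) with ⟨i, hi | hi⟩
    · convert hsum using 2; ext; simp [j]; omega
    · convert hodd using 2; ext; simp [j]; omega

end MajoranaLabel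

section MajoranaProduct

variable {m : ℕ}

lemma majoranaProductLabel_injective : Function.Injective (majoranaProductLabel m) := by
  intro u v huv
  funext k
  have h := Fintype.linearIndependent_iffₛ.mp linearIndependent_majoranaLabel _ _ huv k
  cases hu : u k <;> cases hv : v k <;> simp_all

lemma isScaledPauliString_list_prod (u : Fin (2 * m) → Bool) (l : List (Fin (2 * m))) :
    IsScaledPauliString m (l.map fun k => (if u k then 1 else 0 : ZMod 2) • majoranaLabel m k).sum
      (l.map fun k => if u k then majorana m k else 1).prod := by
  induction l with
  | nil => exact isScaledPauliString_one
  | cons k l ih =>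
    by_cases hu : u k
    · simpa [hu] using
        IsScaledPauliString.mul ⟨1, one_ne_zero, by rw [one_smul, majorana_eq_pauliString]⟩ ih
    · simpa [hu] using ih

lemma isScaledPauliString_Cu (u : Fin (2 * m) → Bool) :
    IsScaledPauliString m (majoranaProductLabel m u) (Cu m u) := by
  rw [majoranaProductLabel, Fin.sum_univ_def]
  exact (isScaledPauliString_list_prod u _).smul (pow_ne_zero _ Complex.I_ne_zero)

lemma trace_conjTranspose_Cu_mul_eq_zero {u v : Fin (2 * m) → Bool} (huv : u ≠ v) :
    ((Cu m u)ᴴ * Cu m v).trace = 0 :=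
  (isScaledPauliString_Cu u).trace_conjTranspose_mul_eq_zero (isScaledPauliString_Cu v)
    (majoranaProductLabel_injective.ne huv)

lemma trace_conjTranspose_Cu_mul_self_ne_zero (u : Fin (2 * m) → Bool) :
    ((Cu m u)ᴴ * Cu m u).trace ≠ 0 :=
  (isScaledPauliString_Cu u).trace_conjTranspose_mul_self_ne_zero

end MajoranaProduct

lemma mul_list_prod_map_eq_smul {ι R A : Type*} [CommSemiring R] [Semiring A] [Algebra R A]
    (a : A) (f : ι → A) (s : ι → R) (l : List ι)
    (h : ∀ i ∈ l, a * f i = s i • (f i * a)) :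
    a * (l.map f).prod = (l.map s).prod • ((l.map f).prod * a) := by
  induction l with
  | nil => simp
  | cons i l ih =>
    simp only [List.map_cons, List.prod_cons]
    rw [← mul_assoc, h i List.mem_cons_self, smul_mul_assoc, mul_assoc,
      ih fun i' hi' => h i' (List.mem_cons_of_mem i hi'), mul_smul_comm, smul_smul, mul_assoc]

def fockSign {m : ℕ} (n : Fin m → Fin 2) : ℂ := ∏ j, ![1, -1] (n j)

section Parity

variable {m : ℕ}

lemma fockSign_mul_self (n : Fin m → Fin 2) : fockSign n * fockSign n = 1 := by
  rw [fockSign, ← Finset.prod_mul_distrib]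
  refine Finset.prod_eq_one fun j _ => ?_
  generalize n j = x
  fin_cases x <;> simp

lemma parity_eq_diagonal : parity m = diagonal fockSign := by
  have hZ : σZ = diagonal ![1, -1] := by
    ext i j; fin_cases i <;> fin_cases j <;> simp [σZ]
  rw [parity, hZ, tensProd_diagonal]
  rfl

lemma σZ_mul_pauli (p : ZMod 2 × ZMod 2) :
    σZ * pauli p = (if p.1 = 0 then 1 else -1 : ℂ) • (pauli p * σZ) := by
  obtain ⟨x, z⟩ := p
  rcases zmod_two_eq_zero_or_one x with rfl | rfl <;>
    rcases zmod_two_eq_zero_or_one z with rfl | rfl <;>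
    ext a b <;> fin_cases a <;> fin_cases b <;>
    simp [pauli, σI, σX, σY, σZ, mul_apply, Fin.sum_univ_two]

lemma parity_mul_majorana (k : Fin (2 * m)) :
    parity m * majorana m k = -(majorana m k * parity m) := by
  let j₀ : Fin m := ⟨k / 2, by omega⟩
  have hsign : ∀ j, (if (majoranaLabel m k j).1 = 0 then 1 else -1 : ℂ) =
      if j = j₀ then -1 else 1 := by
    intro j
    simp only [majoranaLabel, j₀, Fin.ext_iff]
    split_ifs <;> simp_all
  simp only [parity, majorana_eq_pauliString, pauliString, tensProd_mul, σZ_mul_pauli, hsign]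
  rw [tensProd_smul, Finset.prod_ite_eq']
  simp

lemma parity_mul_Cu (u : Fin (2 * m) → Bool) :
    parity m * Cu m u = (-1 : ℂ) ^ hw u • (Cu m u * parity m) := by
  have hfactor : ∀ k, parity m * (if u k then majorana m k else 1) =
      (-1 : ℂ) ^ (if u k then 1 else 0) • ((if u k then majorana m k else 1) * parity m) := by
    intro k
    by_cases hu : u k <;> simp [hu, parity_mul_majorana]
  rw [Cu, mul_smul_comm, mul_list_prod_map_eq_smul _ _ _ _ fun k _ => hfactor k,
    ← Fin.prod_univ_def, Finset.prod_pow_eq_pow_sum, smul_mul_assoc, smul_comm]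
  rfl

lemma fockSign_mul_fockSign_of_Cu_apply_ne_zero {u : Fin (2 * m) → Bool} {a b : Fin m → Fin 2}
    (h : Cu m u a b ≠ 0) : fockSign a * fockSign b = (-1) ^ hw u := by
  have hab := congrFun₂ (parity_mul_Cu u) a b
  simp only [parity_eq_diagonal, diagonal_mul, mul_diagonal, Matrix.smul_apply, smul_eq_mul] at hab
  apply mul_right_cancel₀ h
  linear_combination fockSign b * hab + (-1) ^ hw u * Cu m u a b * fockSign_mul_self b

end Parity

lemma sum_star_mul_star_mul_sum_eq {ι κ P Q : Type*} [Fintype ι] [Fintype κ] [Fintype P]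
    [Fintype Q] {x : ι → P → ℂ} {y : κ → Q → ℂ}
    (hx : Pairwise fun i i' => star (x i) ⬝ᵥ x i' = 0)
    (hy : Pairwise fun j j' => star (y j) ⬝ᵥ y j' = 0)
    (c : ι → κ → ℂ) (i : ι) (j : κ) :
    ∑ p, ∑ q, star (x i p) * star (y j q) * ∑ i', ∑ j', c i' j' * (x i' p * y j' q) =
      c i j * (star (x i) ⬝ᵥ x i) * (star (y j) ⬝ᵥ y j) := by
  have hexpand :
      ∑ p, ∑ q, star (x i p) * star (y j q) * ∑ i', ∑ j', c i' j' * (x i' p * y j' q) =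
        ∑ i', ∑ j', c i' j' * (star (x i) ⬝ᵥ x i') * (star (y j) ⬝ᵥ y j') := by
    simp only [dotProduct, Pi.star_apply, Finset.mul_sum, Finset.sum_mul]
    rw [Finset.sum_comm_cycle]
    refine Finset.sum_congr rfl fun i' _ => ?_
    rw [Finset.sum_comm_cycle]
    refine Finset.sum_congr rfl fun j' _ => ?_
    rw [Finset.sum_comm]
    exact Finset.sum_congr rfl fun _ _ => Finset.sum_congr rfl fun _ _ => by ring
  rw [hexpand, Finset.sum_eq_single i, Finset.sum_eq_single j]
  · intro j' _ hj'; simp [hy (Ne.symm hj')]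
  · simp
  · intro i' _ hi'; simp [hx (Ne.symm hi')]
  · simp

lemma star_vec_transpose_dotProduct_vec_transpose {m n R : Type*} [Fintype m] [Fintype n]
    [NonUnitalNonAssocSemiring R] [Star R] (A B : Matrix m n R) :
    star (Matrix.vec Aᵀ) ⬝ᵥ Matrix.vec Bᵀ = (Aᴴ * B).trace := by
  rw [← star_vec_dotProduct_vec]
  exact comp_equiv_dotProduct_comp_equiv (star (Matrix.vec A)) (Matrix.vec B) (Equiv.prodComm m n)

lemma diagonal_mul_eq_mul_diagonal_iff {n α : Type*} [Fintype n] [DecidableEq n]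
    [NonUnitalNonAssocSemiring α]
    (d : n → α) (K : Matrix n n α) :
    diagonal d * K = K * diagonal d ↔ ∀ p q, d p * K p q = K p q * d q := by
  simp [← Matrix.ext_iff, diagonal_mul, mul_diagonal]

lemma mul_single_one_mul_apply {n α : Type*} [Fintype n] [DecidableEq n] [NonAssocSemiring α]
    (A B : Matrix n n α) (a b b' a' : n) :
    (A * Matrix.single b b' (1 : α) * B) a a' = A a b * B b' a' := by
  simp [mul_apply, single_apply, ite_and, Finset.sum_ite_eq]

lemma choi_apply {A : Type*} [DecidableEq A] (M : Matrix A A ℂ →ₗ[ℂ] Matrix A A ℂ)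
    (a b a' b' : A) : choi M (a, b) (a', b') = M (Matrix.single b b' 1) a a' := by
  have hslice : matSlice b b' (phiMat A) = Matrix.single b b' 1 := by
    ext c c'
    change phiMat A (c, b) (c', b') = _
    simp only [phiMat, of_apply, single_apply]
    split_ifs <;> simp_all
  rw [← hslice]
  rfl

lemma choi_chiMap_apply {m : ℕ} (χ : (Fin (2 * m) → Bool) → (Fin (2 * m) → Bool) → ℂ)
    (a b a' b' : Fin m → Fin 2) :
    choi (chiMap m χ) (a, b) (a', b') = ∑ u, ∑ u', χ u u' * (Cu m u a b * Cu m u' b' a') := by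
  simp [choi_apply, chiMap, Matrix.sum_apply, mul_single_one_mul_apply]

open Kronecker in
lemma parity_kronecker_parity (m : ℕ) :
    parity m ⊗ₖ parity m = diagonal fun p => fockSign p.1 * fockSign p.2 := by
  rw [parity_eq_diagonal, diagonal_kronecker_diagonal]

lemma neg_one_pow_eq_neg_one_pow_iff (a b : ℕ) : (-1 : ℂ) ^ a = (-1) ^ b ↔ a % 2 = b % 2 := by
  rw [neg_one_pow_eq_pow_mod_two a, neg_one_pow_eq_pow_mod_two (R := ℂ) b]
  rcases Nat.mod_two_eq_zero_or_one a with ha | ha <;>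
    rcases Nat.mod_two_eq_zero_or_one b with hb | hb <;> norm_num [ha, hb]

section ChiMatrix

variable {m : ℕ}

lemma fockSign_eq_iff_of_Cu_mul_Cu_ne_zero {u u' : Fin (2 * m) → Bool}
    {a b a' b' : Fin m → Fin 2} (h : Cu m u a b * Cu m u' b' a' ≠ 0) :
    fockSign a * fockSign b = fockSign a' * fockSign b' ↔ hw u % 2 = hw u' % 2 := by
  obtain ⟨h₁, h₂⟩ := mul_ne_zero_iff.mp h
  rw [fockSign_mul_fockSign_of_Cu_apply_ne_zero h₁, mul_comm (fockSign a'),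
    fockSign_mul_fockSign_of_Cu_apply_ne_zero h₂, neg_one_pow_eq_neg_one_pow_iff]

variable (χ : (Fin (2 * m) → Bool) → (Fin (2 * m) → Bool) → ℂ)

lemma fockSign_mul_choi_chiMap_apply (hχ : ∀ u u', hw u % 2 ≠ hw u' % 2 → χ u u' = 0)
    (a b a' b' : Fin m → Fin 2) :
    fockSign a * fockSign b * choi (chiMap m χ) (a, b) (a', b') =
      choi (chiMap m χ) (a, b) (a', b') * (fockSign a' * fockSign b') := by
  rw [choi_chiMap_apply, Finset.mul_sum, Finset.sum_mul]
  refine Finset.sum_congr rfl fun u _ => ?_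
  rw [Finset.mul_sum, Finset.sum_mul]
  refine Finset.sum_congr rfl fun u' _ => ?_
  by_cases h : Cu m u a b * Cu m u' b' a' = 0
  · simp [h]
  by_cases hpar : hw u % 2 = hw u' % 2
  · rw [(fockSign_eq_iff_of_Cu_mul_Cu_ne_zero h).mpr hpar]
    ring
  · simp [hχ u u' hpar]

lemma chi_eq_zero_of_fockSign_mul_choi_chiMap_apply
    (hK : ∀ a b a' b' : Fin m → Fin 2,
      fockSign a * fockSign b * choi (chiMap m χ) (a, b) (a', b') =
        choi (chiMap m χ) (a, b) (a', b') * (fockSign a' * fockSign b'))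
    {u₀ u₀' : Fin (2 * m) → Bool} (hpar : hw u₀ % 2 ≠ hw u₀' % 2) : χ u₀ u₀' = 0 := by
  -- `x u (a, b) = Cu m u a b` and `y u (a', b') = Cu m u b' a'`, matching `choi_chiMap_apply`
  let x u := Matrix.vec (Cu m u)ᵀ
  let y u := Matrix.vec (Cu m u)
  have hx : Pairwise fun u v => star (x u) ⬝ᵥ x v = 0 := fun u v huv => by
    simp only [x, star_vec_transpose_dotProduct_vec_transpose,
      trace_conjTranspose_Cu_mul_eq_zero huv]
  have hy : Pairwise fun u v => star (y u) ⬝ᵥ y v = 0 := fun u v huv => by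
    simp only [y, star_vec_dotProduct_vec, trace_conjTranspose_Cu_mul_eq_zero huv]
  have hpairing : ∑ p, ∑ q, star (x u₀ p) * star (y u₀' q) *
      ∑ u, ∑ u', χ u u' * (x u p * y u' q) = 0 := by
    refine Finset.sum_eq_zero fun ⟨a, b⟩ _ => Finset.sum_eq_zero fun ⟨a', b'⟩ _ => ?_
    change star (Cu m u₀ a b) * star (Cu m u₀' b' a') *
      ∑ u, ∑ u', χ u u' * (Cu m u a b * Cu m u' b' a') = 0
    rw [← choi_chiMap_apply]
    by_cases h : Cu m u₀ a b * Cu m u₀' b' a' = 0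
    · rcases mul_eq_zero.mp h with h | h <;> simp [h]
    have hsign := (fockSign_eq_iff_of_Cu_mul_Cu_ne_zero h).not.mpr hpar
    have hK0 : choi (chiMap m χ) (a, b) (a', b') = 0 := by
      refine (mul_eq_zero.mp ?_).resolve_left (sub_ne_zero.mpr hsign)
      linear_combination hK a b a' b'
    simp [hK0]
  have hx₀ : star (x u₀) ⬝ᵥ x u₀ ≠ 0 := by
    simp only [x, star_vec_transpose_dotProduct_vec_transpose]
    exact trace_conjTranspose_Cu_mul_self_ne_zero u₀
  have hy₀ : star (y u₀') ⬝ᵥ y u₀' ≠ 0 := by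
    simp only [y, star_vec_dotProduct_vec]
    exact trace_conjTranspose_Cu_mul_self_ne_zero u₀'
  rw [sum_star_mul_star_mul_sum_eq hx hy] at hpairing
  simpa [hx₀, hy₀] using hpairing

end ChiMatrix

open Kronecker in
theorem chi_block_diagonal_iff_valid_general (m : ℕ)
    (χ : (Fin (2 * m) → Bool) → (Fin (2 * m) → Bool) → ℂ) :
    (parity m ⊗ₖ parity m) * choi (chiMap m χ) =
        choi (chiMap m χ) * (parity m ⊗ₖ parity m) ↔
      ∀ u u', hw u % 2 ≠ hw u' % 2 → χ u u' = 0 := by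
  rw [parity_kronecker_parity, diagonal_mul_eq_mul_diagonal_iff]
  simp only [Prod.forall]
  exact ⟨fun hK _ _ => chi_eq_zero_of_fockSign_mul_choi_chiMap_apply χ hK,
    fockSign_mul_choi_chiMap_apply χ⟩

open Kronecker in
theorem chi_block_diagonal_iff_valid (m : ℕ) (hm : 1 ≤ m)
    (χ : (Fin (2 * m) → Bool) → (Fin (2 * m) → Bool) → ℂ) :
    (parity m ⊗ₖ parity m) * choi (chiMap m χ) =
        choi (chiMap m χ) * (parity m ⊗ₖ parity m) ↔
      ∀ u u', hw u % 2 ≠ hw u' % 2 → χ u u' = 0 :=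
  chi_block_diagonal_iff_valid_general m χ
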